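/- arXiv:2208.14290 — 2 statements merged into one kernel-verified Lean document; each statement's English description precedes it below -/
import Mathlib

section
/- Soundness and precision of the symbolic pre image: a configuration cf satisfies pre_s(P) if and only if for all configurations cf', cf →^s cf' implies cf' ⊨ P. (I.e., the pre image denotes exactly the configurations all of whose s-successors satisfy P, including configurations with no s-successor.) -/
open scoped NNReal

/-- A PRD automaton, semantically. -/
structure PRD (Q Val E : Type*) where
  shift : Val → ℝ≥0 → Val
  deltaTrans : Set (Q × Set Val × (Val → Val) × Q)
  evTrans : E → Set (Q × Set Val × (Val → Val) × Q)

namespace PRD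

variable {Q Val E : Type*} (A : PRD Q Val E)

/-- One step of the automaton, labeled by an event or a time progression. -/
def step : (Q × Val) → (E ⊕ ℝ≥0) → (Q × Val) → Prop
  | (p, φ), Sum.inl e, (q, φ') =>
      ∃ g up, (p, g, up, q) ∈ A.evTrans e ∧ φ ∈ g ∧ φ' = up φ
  | (p, φ), Sum.inr t, (q, φ') =>
      (∃ g up, (p, g, up, q) ∈ A.deltaTrans ∧
        A.shift φ t ∈ g ∧ φ' = up (A.shift φ t)) ∨
      (t = 0 ∧ q = p ∧ φ' = φ)

/-- The pre image of a condition, built symbolically: conditions assign to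
each state a set of valuations; `σ_{g,up,t}(G)` keeps the valuations `φ`
such that enabledness of `g` after waiting `t` implies the update lands in
`G` (the disjunct `¬g` covers stuck configurations); the meet intersects
these sets over all transitions, and for `t = 0` the stutter step
additionally requires membership in `P` itself. -/
def pre : (E ⊕ ℝ≥0) → (Q → Set Val) → (Q → Set Val)
  | Sum.inl e, P => fun p =>
      {φ | ∀ g up q, (p, g, up, q) ∈ A.evTrans e → φ ∈ g → up φ ∈ P q}
  | Sum.inr t, P => fun p =>
      {φ | ∀ g up q, (p, g, up, q) ∈ A.deltaTrans →
        A.shift φ t ∈ g → up (A.shift φ t) ∈ P q} ∩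
      (if t = 0 then P p else Set.univ)

theorem mem_pre_inl_iff (e : E) (P : Q → Set Val) (p : Q) (φ : Val) :
    φ ∈ A.pre (.inl e) P p ↔
      ∀ cf' : Q × Val, A.step (p, φ) (.inl e) cf' → cf'.2 ∈ P cf'.1 := by
  constructor
  · rintro h ⟨q, _⟩ ⟨g, up, htrans, hg, rfl⟩
    exact h g up q htrans hg
  · intro h g up q htrans hg
    exact h (q, up φ) ⟨g, up, htrans, hg, rfl⟩

theorem mem_pre_inr_iff (t : ℝ≥0) (P : Q → Set Val) (p : Q) (φ : Val) :
    φ ∈ A.pre (.inr t) P p ↔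
      ∀ cf' : Q × Val, A.step (p, φ) (.inr t) cf' → cf'.2 ∈ P cf'.1 := by
  constructor
  · rintro ⟨hdelay, hstutter⟩ ⟨q, _⟩ (⟨g, up, htrans, hg, rfl⟩ | ⟨rfl, rfl, rfl⟩)
    · exact hdelay g up q htrans hg
    · simpa using hstutter
  · intro h
    refine ⟨fun g up q htrans hg =>
      h (q, up (A.shift φ t)) (.inl ⟨g, up, htrans, hg, rfl⟩), ?_⟩
    split_ifs with ht
    · exact h (p, φ) (.inr ⟨ht, rfl, rfl⟩)
    · trivial

/-- Soundness and precision of the symbolic pre image: a configuration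
satisfies `pre_s(P)` iff all of its `s`-successors satisfy `P` (including
configurations without any `s`-successor). -/
theorem pre_sound_precise (s : E ⊕ ℝ≥0) (P : Q → Set Val) (p : Q) (φ : Val) :
    φ ∈ A.pre s P p ↔
      ∀ cf' : Q × Val, A.step (p, φ) s cf' → cf'.2 ∈ P cf'.1 := by
  cases s with
  | inl e => exact A.mem_pre_inl_iff e P p φ
  | inr t => exact A.mem_pre_inr_iff t P p φ

end PRD
end

section
/- Precision of the strongest postcondition with precise widening: if the widening ∇ is precise (∇ M = ⋃ M for all argument families M), then validity of {P} w {R} implies sp(P, w) ⊑ R. -/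
open scoped NNReal

variable {C E : Type*}

/-- Step sequences along a trace (list of symbols). -/
def Steps (step : C → (E ⊕ ℝ≥0) → C → Prop) : C → List (E ⊕ ℝ≥0) → C → Prop
  | c, [], c' => c = c'
  | c, s :: w, c' => ∃ c'', step c s c'' ∧ Steps step c'' w c'

/-- Trace equivalence: the least equivalence closed under inserting zero time
progressions and splitting a time progression into two summands. -/
inductive TEquiv : List (E ⊕ ℝ≥0) → List (E ⊕ ℝ≥0) → Prop
  | refl (w) : TEquiv w w
  | symm {w u} : TEquiv w u → TEquiv u w
  | trans {w u v} : TEquiv w u → TEquiv u v → TEquiv w v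
  | zero (w1 w2) : TEquiv (w1 ++ w2) (w1 ++ Sum.inr 0 :: w2)
  | split (w1 w2) (t t1 t2 : ℝ≥0) (h : t = t1 + t2) :
      TEquiv (w1 ++ Sum.inr t :: w2) (w1 ++ Sum.inr t1 :: Sum.inr t2 :: w2)

/-- Hoare validity: from every configuration satisfying `P`, every step
sequence along any trace equivalent to `w` ends in a configuration in `R`. -/
def HoareValid (step : C → (E ⊕ ℝ≥0) → C → Prop)
    (P : Set C) (w : List (E ⊕ ℝ≥0)) (R : Set C) : Prop :=
  ∀ cf ∈ P, ∀ u, TEquiv u w → ∀ cf', Steps step cf u cf' → cf' ∈ R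

/-- Semantic post image for one symbol. -/
def postSem (step : C → (E ⊕ ℝ≥0) → C → Prop) (s : E ⊕ ℝ≥0) (P : Set C) :
    Set C :=
  {cf' | ∃ cf ∈ P, step cf s cf'}

/-- Iterated post image along a list of time progressions. -/
def iterPost (step : C → (E ⊕ ℝ≥0) → C → Prop) (l : List ℝ≥0) (P : Set C) :
    Set C :=
  l.foldl (fun acc t => postSem step (Sum.inr t) acc) P

/-- Strongest postcondition for one symbol: post image for events; for time
progressions, the (precise) widening, i.e. the union over all finite
decompositions of the time progression, of the iterated post images. -/
def spSym (step : C → (E ⊕ ℝ≥0) → C → Prop) : (E ⊕ ℝ≥0) → Set C → Set C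
  | Sum.inl e, P => postSem step (Sum.inl e) P
  | Sum.inr t, P => ⋃ (l : List ℝ≥0) (_ : l.sum = t), iterPost step l P

/-- Strongest postcondition of a trace, by composition. -/
def sp (step : C → (E ⊕ ℝ≥0) → C → Prop) (P : Set C) (w : List (E ⊕ ℝ≥0)) :
    Set C :=
  w.foldl (fun acc s => spSym step s acc) P

/-- Semantic pre image for one symbol: all `s`-successors lie in `R`. -/
def preSem (step : C → (E ⊕ ℝ≥0) → C → Prop) (s : E ⊕ ℝ≥0) (R : Set C) :
    Set C :=
  {cf | ∀ cf', step cf s cf' → cf' ∈ R}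

/-- Iterated pre image along a list of time progressions. -/
def iterPre (step : C → (E ⊕ ℝ≥0) → C → Prop) (l : List ℝ≥0) (R : Set C) :
    Set C :=
  l.foldr (fun t acc => preSem step (Sum.inr t) acc) R

/-- Weakest precondition for one symbol: pre image for events; for time
progressions, the (precise) narrowing, i.e. the intersection over all finite
decompositions of the time progression, of the iterated pre images. -/
def wpSym (step : C → (E ⊕ ℝ≥0) → C → Prop) : (E ⊕ ℝ≥0) → Set C → Set C
  | Sum.inl e, R => preSem step (Sum.inl e) R
  | Sum.inr t, R => ⋂ (l : List ℝ≥0) (_ : l.sum = t), iterPre step l R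

/-- Weakest precondition of a trace, by right-to-left composition. -/
def wp (step : C → (E ⊕ ℝ≥0) → C → Prop) (w : List (E ⊕ ℝ≥0)) (R : Set C) :
    Set C :=
  w.foldr (fun s acc => wpSym step s acc) R

/-! Every configuration in `sp step P w` is reached from `P` along a trace equivalent to `w`:
the widening at a time progression `t` collects the configurations reached along some
decomposition `l` of `t`, and such a decomposition is trace equivalent to `t` by splitting
(or, for the empty decomposition of `0`, by inserting a zero progression). Hoare validity
then places each of them in `R`. -/

namespace TEquiv

lemma append_context {u v : List (E ⊕ ℝ≥0)} (h : TEquiv u v) (x y : List (E ⊕ ℝ≥0)) :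
    TEquiv (x ++ u ++ y) (x ++ v ++ y) := by
  induction h with
  | refl => exact .refl _
  | symm _ ih => exact .symm ih
  | trans _ _ ih₁ ih₂ => exact .trans ih₁ ih₂
  | zero w₁ w₂ => simpa using TEquiv.zero (x ++ w₁) (w₂ ++ y)
  | split w₁ w₂ t t₁ t₂ ht => simpa using TEquiv.split (x ++ w₁) (w₂ ++ y) t t₁ t₂ ht

lemma append_right {u v : List (E ⊕ ℝ≥0)} (h : TEquiv u v) (y : List (E ⊕ ℝ≥0)) :
    TEquiv (u ++ y) (v ++ y) := by
  simpa using h.append_context [] y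

lemma append_left {u v : List (E ⊕ ℝ≥0)} (h : TEquiv u v) (x : List (E ⊕ ℝ≥0)) :
    TEquiv (x ++ u) (x ++ v) := by
  simpa using h.append_context x []

lemma map_inr_sum (l : List ℝ≥0) :
    TEquiv (l.map Sum.inr : List (E ⊕ ℝ≥0)) [Sum.inr l.sum] := by
  induction l with
  | nil => simpa using TEquiv.zero ([] : List (E ⊕ ℝ≥0)) []
  | cons t l ih =>
    have hsplit : TEquiv ([Sum.inr (t + l.sum)] : List (E ⊕ ℝ≥0))
        [Sum.inr t, Sum.inr l.sum] := by
      simpa using TEquiv.split ([] : List (E ⊕ ℝ≥0)) [] (t + l.sum) t l.sum rfl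
    simpa using (ih.append_left [Sum.inr t]).trans hsplit.symm

end TEquiv

section Reachability

variable (step : C → (E ⊕ ℝ≥0) → C → Prop)

lemma steps_append_iff (u v : List (E ⊕ ℝ≥0)) (c c' : C) :
    Steps step c (u ++ v) c' ↔ ∃ c'', Steps step c u c'' ∧ Steps step c'' v c' := by
  induction u generalizing c with
  | nil => simp [Steps]
  | cons s u ih => simp only [List.cons_append, Steps, ih]; grind

lemma mem_iterPost_iff (l : List ℝ≥0) (Q : Set C) (c' : C) :
    c' ∈ iterPost step l Q ↔ ∃ c ∈ Q, Steps step c (l.map Sum.inr) c' := by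
  induction l generalizing Q with
  | nil => simp [iterPost, Steps]
  | cons t l ih =>
    change c' ∈ iterPost step l (postSem step (Sum.inr t) Q) ↔ _
    simp only [ih, postSem, List.map_cons, Steps]
    grind

lemma exists_tequiv_steps_of_mem_spSym {s : E ⊕ ℝ≥0} {Q : Set C} {c' : C}
    (h : c' ∈ spSym step s Q) : ∃ v, TEquiv v [s] ∧ ∃ c ∈ Q, Steps step c v c' := by
  cases s with
  | inl e =>
    obtain ⟨c, hc, hstep⟩ := h
    exact ⟨[Sum.inl e], .refl _, c, hc, c', hstep, rfl⟩
  | inr t =>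
    simp only [spSym, Set.mem_iUnion] at h
    obtain ⟨l, rfl, hl⟩ := h
    exact ⟨l.map Sum.inr, TEquiv.map_inr_sum l, (mem_iterPost_iff step l Q c').1 hl⟩

lemma exists_tequiv_steps_of_mem_sp {w : List (E ⊕ ℝ≥0)} {Q : Set C} {c' : C}
    (h : c' ∈ sp step Q w) : ∃ u, TEquiv u w ∧ ∃ c ∈ Q, Steps step c u c' := by
  induction w generalizing Q with
  | nil => exact ⟨[], .refl _, c', h, rfl⟩
  | cons s w ih =>
    obtain ⟨u, hu, c₁, hc₁, hsteps⟩ := ih (Q := spSym step s Q) h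
    obtain ⟨v, hv, c, hc, hsteps₁⟩ := exists_tequiv_steps_of_mem_spSym step hc₁
    exact ⟨v ++ u, (hv.append_right u).trans (hu.append_left [s]),
      c, hc, (steps_append_iff step v u c c').2 ⟨c₁, hsteps₁, hsteps⟩⟩

end Reachability

/-- Precision of the strongest postcondition with the precise widening
(`∇ M = ⋃ M`, as used in the definition of `sp`): validity of `{P} w {R}`
implies `sp(P, w) ⊑ R`. -/
theorem sp_precise (step : C → (E ⊕ ℝ≥0) → C → Prop)
    (P R : Set C) (w : List (E ⊕ ℝ≥0))
    (h : HoareValid step P w R) : sp step P w ⊆ R := by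
  intro c' hc'
  obtain ⟨u, hu, c, hc, hsteps⟩ := exists_tequiv_steps_of_mem_sp step hc'
  exact h c hc u hu c' hsteps
end
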